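/- arXiv:2008.08621 — 3 statements merged into one kernel-verified Lean document; each statement's English description precedes it below -/
import Mathlib

section
/- Let G be a finite simple graph on n vertices with no even cycles. Then, as polynomials in x with rational coefficients, (1/2^n) · Σ_{S ⊆ V(G)} Σ_{k≥0} |M(E_S,k)| (4x)^k = g(G,2x), and moreover Σ_{S ⊆ V(G)} Σ_{k≥0} |M(E_S,k)| = 2^n · g(G, 1/2). -/
open Polynomial

variable {V : Type} [Fintype V] [DecidableEq V]

/-- `M` is a matching of `G`: a finset of edges of `G` that pairwise share no vertex. -/
def IsGMatching (G : SimpleGraph V) (M : Finset (Sym2 V)) : Prop :=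
  (M : Set (Sym2 V)) ⊆ G.edgeSet ∧
    (M : Set (Sym2 V)).Pairwise fun e f => ∀ v : V, ¬ (v ∈ e ∧ v ∈ f)

/-- The set of vertices covered by a finset of edges. -/
def edgeVerts (F : Finset (Sym2 V)) : Set V := {v | ∃ e ∈ F, v ∈ e}

/-- `m_k(G)`: the number of `k`-matchings of `G`. -/
noncomputable def mCount (G : SimpleGraph V) (k : ℕ) : ℕ :=
  Nat.card {M : Finset (Sym2 V) // IsGMatching G M ∧ M.card = k}

/-- `|M(G,k)|`: the number of vertex subsets that are the vertex set of some `k`-matching. -/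
noncomputable def MCount (G : SimpleGraph V) (k : ℕ) : ℕ :=
  Nat.card {W : Set V // ∃ M : Finset (Sym2 V), IsGMatching G M ∧ M.card = k ∧ edgeVerts M = W}

/-- The matching generating polynomial `g(G,x) = ∑_k m_k(G) x^k` (over `ℚ`). -/
noncomputable def gPoly (G : SimpleGraph V) : Polynomial ℚ :=
  ∑ k ∈ Finset.range (Fintype.card V + 1), C (mCount G k : ℚ) * X ^ k

/-- The cut `E_S`: the subgraph of `G` consisting of the edges of `G`
with exactly one endpoint in `S`. -/
def cutGraph (G : SimpleGraph V) (S : Finset V) : SimpleGraph V where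
  Adj u v := G.Adj u v ∧ ((u ∈ S ∧ v ∉ S) ∨ (u ∉ S ∧ v ∈ S))
  symm := by
    constructor
    rintro u v ⟨h, h'⟩
    refine ⟨h.symm, ?_⟩
    tauto
  loopless := by
    constructor
    rintro u ⟨h, _⟩
    exact G.irrefl h

set_option linter.unusedSectionVars false

/-- Walk along a sequence of adjacent vertices. -/
def walkOfSeq (G : SimpleGraph V) (x : ℕ → V) (hadj : ∀ n, G.Adj (x n) (x (n+1))) :
    ∀ n, G.Walk (x 0) (x n)
  | 0 => .nil
  | (n+1) => (walkOfSeq G x hadj n).concat (hadj n)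

lemma walkOfSeq_length (G : SimpleGraph V) (x : ℕ → V) (hadj : ∀ n, G.Adj (x n) (x (n+1)))
    (n : ℕ) : (walkOfSeq G x hadj n).length = n := by
  induction n with
  | zero => rfl
  | succ n ih => simp [walkOfSeq, SimpleGraph.Walk.length_concat, ih]

lemma walkOfSeq_support (G : SimpleGraph V) (x : ℕ → V) (hadj : ∀ n, G.Adj (x n) (x (n+1)))
    (n : ℕ) : (walkOfSeq G x hadj n).support = (List.range (n+1)).map x := by
  induction n with
  | zero => simp [walkOfSeq, List.range_succ]
  | succ n ih =>
    simp only [walkOfSeq, SimpleGraph.Walk.support_concat, ih, List.range_succ (n := n+1)]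
    simp

lemma walkOfSeq_edges (G : SimpleGraph V) (x : ℕ → V) (hadj : ∀ n, G.Adj (x n) (x (n+1)))
    (n : ℕ) : (walkOfSeq G x hadj n).edges = (List.range n).map (fun i => s(x i, x (i+1))) := by
  induction n with
  | zero => simp [walkOfSeq, List.range_succ]
  | succ n ih =>
    simp only [walkOfSeq, SimpleGraph.Walk.edges_concat, ih, List.range_succ (n := n)]
    simp

lemma mem_edgeVerts {F : Finset (Sym2 V)} {v : V} :
    v ∈ edgeVerts F ↔ ∃ e ∈ F, v ∈ e := Iff.rfl

/-- Core lemma: two disjoint nonempty matchings cannot cover the same vertex set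
if the graph has no even cycles. -/
lemma core_lemma (G : SimpleGraph V)
    (hG : ∀ (v : V) (w : G.Walk v v), w.IsCycle → ¬ Even w.length)
    (M N : Finset (Sym2 V)) (hM : IsGMatching G M) (hN : IsGMatching G N)
    (hd : Disjoint M N) (hV : edgeVerts M = edgeVerts N) (hne : M.Nonempty) : False := by
  classical
  obtain ⟨e0, he0⟩ := hne
  have uniqM : ∀ e ∈ M, ∀ f ∈ M, ∀ v : V, v ∈ e → v ∈ f → e = f := by
    intro e he f hf v hv hv'
    by_contra hnef
    exact hM.2 he hf hnef v ⟨hv, hv'⟩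
  have uniqN : ∀ e ∈ N, ∀ f ∈ N, ∀ v : V, v ∈ e → v ∈ f → e = f := by
    intro e he f hf v hv hv'
    by_contra hnef
    exact hN.2 he hf hnef v ⟨hv, hv'⟩
  set W := edgeVerts M with hW
  have hexM : ∀ v ∈ W, ∃ w, s(v, w) ∈ M := by
    intro v hv
    obtain ⟨e, he, hve⟩ := hv
    obtain ⟨w, rfl⟩ := Sym2.mem_iff_exists.mp hve
    exact ⟨w, he⟩
  have hexN : ∀ v ∈ W, ∃ w, s(v, w) ∈ N := by
    intro v hv
    obtain ⟨e, he, hve⟩ := hV ▸ hv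
    obtain ⟨w, rfl⟩ := Sym2.mem_iff_exists.mp hve
    exact ⟨w, he⟩
  set a : V → V := fun v => if h : v ∈ W then (hexM v h).choose else v with ha
  set b : V → V := fun v => if h : v ∈ W then (hexN v h).choose else v with hb
  have haM : ∀ v ∈ W, s(v, a v) ∈ M := by
    intro v hv; simp only [ha, dif_pos hv]; exact (hexM v hv).choose_spec
  have hbN : ∀ v ∈ W, s(v, b v) ∈ N := by
    intro v hv; simp only [hb, dif_pos hv]; exact (hexN v hv).choose_spec
  have haW : ∀ v ∈ W, a v ∈ W := by
    intro v hv; exact ⟨s(v, a v), haM v hv, Sym2.mem_mk_right _ _⟩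
  have hbW : ∀ v ∈ W, b v ∈ W := by
    intro v hv
    rw [hV]
    exact ⟨s(v, b v), hbN v hv, Sym2.mem_mk_right _ _⟩
  have haa : ∀ v ∈ W, a (a v) = v := by
    intro v hv
    have h1 : s(a v, a (a v)) ∈ M := haM _ (haW v hv)
    have h2 : s(a v, v) ∈ M := by rw [Sym2.eq_swap]; exact haM v hv
    have := uniqM _ h1 _ h2 (a v) (Sym2.mem_mk_left _ _) (Sym2.mem_mk_left _ _)
    exact Sym2.congr_right.mp this
  have hbb : ∀ v ∈ W, b (b v) = v := by
    intro v hv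
    have h1 : s(b v, b (b v)) ∈ N := hbN _ (hbW v hv)
    have h2 : s(b v, v) ∈ N := by rw [Sym2.eq_swap]; exact hbN v hv
    have := uniqN _ h1 _ h2 (b v) (Sym2.mem_mk_left _ _) (Sym2.mem_mk_left _ _)
    exact Sym2.congr_right.mp this
  -- starting vertex
  induction e0 using Sym2.ind with
  | _ u0 w0 =>
  have hu0 : u0 ∈ W := ⟨s(u0, w0), he0, Sym2.mem_mk_left _ _⟩
  -- the alternating sequence
  set x : ℕ → V := fun n => Nat.rec u0 (fun n xn => if Even n then a xn else b xn) n with hx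
  have hx_succ : ∀ n, x (n+1) = if Even n then a (x n) else b (x n) := fun n => rfl
  have hxW : ∀ n, x n ∈ W := by
    intro n
    induction n with
    | zero => exact hu0
    | succ n ih =>
      rw [hx_succ]
      by_cases h : Even n
      · rw [if_pos h]; exact haW _ ih
      · rw [if_neg h]; exact hbW _ ih
  have hstep_even : ∀ n, Even n → x (n+1) = a (x n) := by
    intro n h; rw [hx_succ, if_pos h]
  have hstep_odd : ∀ n, ¬ Even n → x (n+1) = b (x n) := by
    intro n h; rw [hx_succ, if_neg h]
  have hback_even : ∀ n, Even n → x n = a (x (n+1)) := by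
    intro n h; rw [hstep_even n h, haa _ (hxW n)]
  have hback_odd : ∀ n, ¬ Even n → x n = b (x (n+1)) := by
    intro n h; rw [hstep_odd n h, hbb _ (hxW n)]
  have hedgeM : ∀ n, Even n → s(x n, x (n+1)) ∈ M := by
    intro n h; rw [hstep_even n h]; exact haM _ (hxW n)
  have hedgeN : ∀ n, ¬ Even n → s(x n, x (n+1)) ∈ N := by
    intro n h; rw [hstep_odd n h]; exact hbN _ (hxW n)
  have hadj : ∀ n, G.Adj (x n) (x (n+1)) := by
    intro n
    rw [← SimpleGraph.mem_edgeSet]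
    by_cases h : Even n
    · exact hM.1 (hedgeM n h)
    · exact hN.1 (hedgeN n h)
  -- translation lemma
  have hdown : ∀ j, Even j → ∀ i, x (i+1) = x (i+1+j) → x i = x (i+j) := by
    intro j hj i hi
    have e : i + j + 1 = i + 1 + j := by omega
    by_cases hp : Even i
    · rw [hback_even i hp, hback_even (i+j) (hp.add hj), e, ← hi]
    · have hp2 : ¬ Even (i+j) := by
        simp only [Nat.even_iff] at hp hj ⊢; omega
      rw [hback_odd i hp, hback_odd (i+j) hp2, e, ← hi]
  have hshift : ∀ j, Even j → ∀ i, x i = x (i+j) → x 0 = x j := by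
    intro j hj i
    induction i with
    | zero => intro h; simpa using h
    | succ n ih => intro h; exact ih (hdown j hj n h)
  -- no collisions at odd distance
  have hodd_ne : ∀ d i, x i ≠ x (i + (2*d+1)) := by
    intro d
    induction d with
    | zero =>
      intro i h
      rw [show i + (2*0+1) = i + 1 from by omega] at h
      exact (hadj i).ne h
    | succ d ih =>
      intro i h
      rw [show i + (2*(d+1)+1) = i + 2*d + 2 + 1 from by omega] at h
      apply ih (i+1)
      rw [show i + 1 + (2*d+1) = i + 2*d + 2 from by omega]
      by_cases hp : Even i
      · have hp2 : Even (i + 2*d + 2) := by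
          simp only [Nat.even_iff] at hp ⊢; omega
        rw [hstep_even i hp, hback_even (i + 2*d + 2) hp2, ← h]
      · have hp2 : ¬ Even (i + 2*d + 2) := by
          simp only [Nat.even_iff] at hp ⊢; omega
        rw [hstep_odd i hp, hback_odd (i + 2*d + 2) hp2, ← h]
  -- pigeonhole: the sequence returns to its start at an even time
  have hex : ∃ p, 0 < p ∧ Even p ∧ x p = x 0 := by
    obtain ⟨i, j, hij, hxij⟩ :=
      Fintype.exists_ne_map_eq_of_card_lt
        (fun i : Fin (Fintype.card V + 1) => x (2 * i)) (by simp)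
    rcases Nat.lt_or_ge (i : ℕ) (j : ℕ) with hlt | hge
    · refine ⟨2 * (j : ℕ) - 2 * (i : ℕ), by omega, ⟨(j : ℕ) - (i : ℕ), by omega⟩, ?_⟩
      exact (hshift _ ⟨(j : ℕ) - (i : ℕ), by omega⟩ (2 * (i : ℕ))
        (by rw [show 2 * (i : ℕ) + (2 * (j : ℕ) - 2 * (i : ℕ)) = 2 * (j : ℕ) from by omega]
            exact hxij)).symm
    · have hlt : (j : ℕ) < (i : ℕ) := by
        rcases Nat.lt_or_ge (j : ℕ) (i : ℕ) with h' | h'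
        · exact h'
        · exact absurd (Fin.ext (by omega)) hij
      refine ⟨2 * (i : ℕ) - 2 * (j : ℕ), by omega, ⟨(i : ℕ) - (j : ℕ), by omega⟩, ?_⟩
      exact (hshift _ ⟨(i : ℕ) - (j : ℕ), by omega⟩ (2 * (j : ℕ))
        (by rw [show 2 * (j : ℕ) + (2 * (i : ℕ) - 2 * (j : ℕ)) = 2 * (i : ℕ) from by omega]
            exact hxij.symm)).symm
  set L := Nat.find hex with hLdef
  obtain ⟨hL0, hLeven, hLx⟩ : 0 < L ∧ Even L ∧ x L = x 0 := Nat.find_spec hex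
  -- injectivity on [0, L)
  have key_inj : ∀ i j, i < j → j < L → x i ≠ x j := by
    intro i j hij hjL heq
    by_cases hp : (i % 2 = j % 2)
    · have hev : Even (j - i) := ⟨(j - i) / 2, by omega⟩
      have h0 : x 0 = x (j - i) :=
        hshift (j - i) hev i (by rw [show i + (j - i) = j from by omega]; exact heq)
      exact Nat.find_min hex (show j - i < L from by omega) ⟨by omega, hev, h0.symm⟩
    · obtain ⟨d, hd⟩ : ∃ d, j = i + (2 * d + 1) := ⟨(j - i - 1) / 2, by omega⟩
      exact hodd_ne d i (by rw [← hd]; exact heq)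
  -- build the closed walk
  set w : G.Walk (x 0) (x 0) := (walkOfSeq G x hadj L).copy rfl hLx with hw
  have hlen : w.length = L := by
    rw [hw, SimpleGraph.Walk.length_copy, walkOfSeq_length]
  have hedges : w.edges = (List.range L).map (fun i => s(x i, x (i+1))) := by
    rw [hw, SimpleGraph.Walk.edges_copy, walkOfSeq_edges]
  have hsupp : w.support = (List.range (L+1)).map x := by
    rw [hw, SimpleGraph.Walk.support_copy, walkOfSeq_support]
  -- edge injectivity
  have aux_e : ∀ i j, i < j → j < L →
      s(x i, x (i+1)) ≠ s(x j, x (j+1)) := by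
    intro i j hij hjL hf
    have hpar : i % 2 = j % 2 := by
      by_contra hp
      by_cases hi2 : Even i
      · have hj2 : ¬ Even j := by
          simp only [Nat.even_iff] at hi2 ⊢; omega
        exact (Finset.disjoint_left.mp hd (hedgeM i hi2)) (hf.symm ▸ hedgeN j hj2)
      · have hj2 : Even j := by
          simp only [Nat.even_iff] at hi2 ⊢; omega
        exact (Finset.disjoint_left.mp hd (hedgeM j hj2)) (hf ▸ hedgeN i hi2)
    rcases Sym2.eq_iff.mp hf with ⟨h1, _⟩ | ⟨_, h2⟩
    · exact key_inj i j hij hjL h1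
    · exact key_inj (i+1) j (by omega) hjL h2
  have htrail : w.edges.Nodup := by
    rw [hedges]
    refine List.Nodup.map_on ?_ (List.nodup_range (n := L))
    intro i hi j hj hf
    rw [List.mem_range] at hi hj
    rcases lt_trichotomy i j with h | h | h
    · exact absurd hf (aux_e i j h hj)
    · exact h
    · exact absurd hf.symm (aux_e j i h hi)
  have hnenil : w ≠ SimpleGraph.Walk.nil := by
    intro hcon
    rw [hcon] at hlen
    simp at hlen
    omega
  have htail : w.support.tail.Nodup := by
    rw [hsupp, List.range_succ_eq_map, List.map_cons, List.tail_cons, List.map_map]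
    refine List.Nodup.map_on ?_ (List.nodup_range (n := L))
    intro i hi j hj hf
    rw [List.mem_range] at hi hj
    simp only [Function.comp] at hf
    have aux2 : ∀ i j, i < j → j < L → x (i+1) = x (j+1) → False := by
      intro i j hij hjL hxe
      rcases Nat.lt_or_ge (j+1) L with h' | h'
      · exact key_inj (i+1) (j+1) (by omega) h' hxe
      · have hjL' : j + 1 = L := by omega
        rw [hjL', hLx] at hxe
        exact key_inj 0 (i+1) (by omega) (by omega) hxe.symm
    rcases lt_trichotomy i j with h | h | h
    · exact absurd hf (fun hc => aux2 i j h hj hc)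
    · exact h
    · exact absurd hf.symm (fun hc => aux2 j i h hi hc)
  have hcyc : w.IsCycle := ⟨⟨⟨htrail⟩, hnenil⟩, htail⟩
  exact hG (x 0) w hcyc (hlen ▸ hLeven)

/-- Matchings in a graph without even cycles are determined by their vertex sets. -/
lemma matching_eq_of_edgeVerts_eq (G : SimpleGraph V)
    (hG : ∀ (v : V) (w : G.Walk v v), w.IsCycle → ¬ Even w.length)
    {M N : Finset (Sym2 V)} (hM : IsGMatching G M) (hN : IsGMatching G N)
    (h : edgeVerts M = edgeVerts N) : M = N := by
  classical
  by_contra hne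
  have sub : ∀ (P Q : Finset (Sym2 V)), IsGMatching G P → IsGMatching G (P \ Q) := by
    intro P Q hP
    refine ⟨fun e he => hP.1 ?_, hP.2.mono ?_⟩
    · rw [Finset.mem_coe] at he ⊢
      exact (Finset.mem_sdiff.mp he).1
    · intro e he
      rw [Finset.mem_coe] at he ⊢
      exact (Finset.mem_sdiff.mp he).1
  have dir : ∀ (P Q : Finset (Sym2 V)), IsGMatching G P → IsGMatching G Q →
      edgeVerts P = edgeVerts Q → ∀ v, v ∈ edgeVerts (P \ Q) → v ∈ edgeVerts (Q \ P) := by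
    intro P Q hP hQ hPQ v hv
    obtain ⟨e, he, hve⟩ := hv
    have heP : e ∈ P := (Finset.mem_sdiff.mp he).1
    have heQ : e ∉ Q := (Finset.mem_sdiff.mp he).2
    have hvQ : v ∈ edgeVerts Q := hPQ ▸ ⟨e, heP, hve⟩
    obtain ⟨f, hf, hvf⟩ := hvQ
    refine ⟨f, Finset.mem_sdiff.mpr ⟨hf, fun hfP => ?_⟩, hvf⟩
    have hef : e = f := by
      by_contra hef
      exact hP.2 heP hfP hef v ⟨hve, hvf⟩
    exact heQ (hef ▸ hf)
  have hMN' : edgeVerts (M \ N) = edgeVerts (N \ M) := by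
    ext v
    exact ⟨dir M N hM hN h v, dir N M hN hM h.symm v⟩
  have h1 : (M \ N).Nonempty ∨ (N \ M).Nonempty := by
    by_contra hc
    push_neg at hc
    obtain ⟨hc1, hc2⟩ := hc
    rw [Finset.sdiff_eq_empty_iff_subset] at hc1 hc2
    exact hne (le_antisymm hc1 hc2)
  rcases h1 with h1 | h1
  · exact core_lemma G hG (M \ N) (N \ M) (sub M N hM) (sub N M hN)
      disjoint_sdiff_sdiff hMN' h1
  · exact core_lemma G hG (N \ M) (M \ N) (sub N M hN) (sub M N hM)
      disjoint_sdiff_sdiff hMN'.symm h1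

lemma cutGraph_le (G : SimpleGraph V) (S : Finset V) : cutGraph G S ≤ G := fun _ _ h => h.1

lemma isGMatching_of_cut {G : SimpleGraph V} {S : Finset V} {M : Finset (Sym2 V)}
    (h : IsGMatching (cutGraph G S) M) : IsGMatching G M :=
  ⟨h.1.trans (SimpleGraph.edgeSet_mono (cutGraph_le G S)), h.2⟩

lemma MCount_eq_mCount (G : SimpleGraph V)
    (hG : ∀ (v : V) (w : G.Walk v v), w.IsCycle → ¬ Even w.length)
    (S : Finset V) (k : ℕ) : MCount (cutGraph G S) k = mCount (cutGraph G S) k := by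
  symm
  unfold mCount MCount
  apply Nat.card_eq_of_bijective
    (fun M : {M : Finset (Sym2 V) // IsGMatching (cutGraph G S) M ∧ M.card = k} =>
      (⟨edgeVerts M.1, M.1, M.2.1, M.2.2, rfl⟩ :
        {W : Set V // ∃ M, IsGMatching (cutGraph G S) M ∧ M.card = k ∧ edgeVerts M = W}))
  constructor
  · intro M M' hMM'
    have heq : edgeVerts M.1 = edgeVerts M'.1 := congrArg Subtype.val hMM'
    exact Subtype.ext (matching_eq_of_edgeVerts_eq G hG
      (isGMatching_of_cut M.2.1) (isGMatching_of_cut M'.2.1) heq)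
  · rintro ⟨W, M, hM1, hM2, hM3⟩
    exact ⟨⟨M, hM1, hM2⟩, Subtype.ext hM3⟩

attribute [local instance] Classical.propDecidable

def crossPred (S : Finset V) (e : Sym2 V) : Prop :=
  Sym2.lift ⟨fun u v => ¬((u ∈ S) ↔ (v ∈ S)), by intro u v; exact propext (by tauto)⟩ e

lemma crossPred_mk {S : Finset V} {u v : V} :
    crossPred S s(u, v) ↔ ¬((u ∈ S) ↔ (v ∈ S)) := Iff.rfl

lemma mem_cut_edgeSet (G : SimpleGraph V) (S : Finset V) (e : Sym2 V) :
    e ∈ (cutGraph G S).edgeSet ↔ e ∈ G.edgeSet ∧ crossPred S e := by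
  induction e using Sym2.ind with
  | _ u v =>
    rw [SimpleGraph.mem_edgeSet, SimpleGraph.mem_edgeSet, crossPred_mk]
    show (G.Adj u v ∧ _) ↔ _
    constructor
    · rintro ⟨h1, h2⟩; exact ⟨h1, by tauto⟩
    · rintro ⟨h1, h2⟩; refine ⟨h1, by tauto⟩

lemma matching_cut_iff (G : SimpleGraph V) (S : Finset V) (M : Finset (Sym2 V)) :
    IsGMatching (cutGraph G S) M ↔ IsGMatching G M ∧ ∀ e ∈ M, crossPred S e := by
  constructor
  · intro h
    refine ⟨⟨fun e he => ?_, h.2⟩, fun e he => ?_⟩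
    · exact (mem_cut_edgeSet G S e).mp (h.1 he) |>.1
    · exact ((mem_cut_edgeSet G S e).mp (h.1 (Finset.mem_coe.mpr he))).2
  · intro h
    refine ⟨fun e he => ?_, h.1.2⟩
    exact (mem_cut_edgeSet G S e).mpr ⟨h.1.1 he, h.2 e (Finset.mem_coe.mp he)⟩

lemma cross_count (M : Finset (Sym2 V)) :
    (∀ e ∈ M, ¬ e.IsDiag) →
    ((M : Set (Sym2 V)).Pairwise fun e f => ∀ v : V, ¬ (v ∈ e ∧ v ∈ f)) →
    (Finset.univ.filter fun S : Finset V => ∀ e ∈ M, crossPred S e).card * 2 ^ M.card =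
      2 ^ Fintype.card V := by
  induction M using Finset.induction_on with
  | empty =>
    intro _ _
    simp [Finset.filter_true_of_mem, Finset.card_univ, Fintype.card_finset]
  | @insert e M' hem ih =>
    intro hdiag hpair
    induction e using Sym2.ind with
    | _ u v =>
    have huv : u ≠ v := by
      have := hdiag s(u, v) (Finset.mem_insert_self _ _)
      simpa [Sym2.mk_isDiag_iff] using this
    have hu_not : ∀ f ∈ M', u ∉ f := by
      intro f hf hu
      have hnef : s(u, v) ≠ f := by rintro rfl; exact hem hf
      exact hpair (Finset.mem_coe.mpr (Finset.mem_insert_self _ _))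
        (Finset.mem_coe.mpr (Finset.mem_insert_of_mem hf)) hnef u
        ⟨Sym2.mem_mk_left _ _, hu⟩
    have hpair' : ((M' : Set (Sym2 V)).Pairwise fun e f => ∀ v : V, ¬ (v ∈ e ∧ v ∈ f)) :=
      hpair.mono (by intro f hf; rw [Finset.mem_coe] at hf ⊢; exact Finset.mem_insert_of_mem hf)
    have hdiag' : ∀ f ∈ M', ¬ f.IsDiag := fun f hf => hdiag f (Finset.mem_insert_of_mem hf)
    -- invariance of crossing under toggling u
    have hcrossinv : ∀ f : Sym2 V, u ∉ f → ∀ S : Finset V,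
        (crossPred (symmDiff S {u}) f ↔ crossPred S f) := by
      intro f hu S
      induction f using Sym2.ind with
      | _ p q =>
        have hp : p ≠ u := fun hc => hu (hc ▸ Sym2.mem_mk_left _ _)
        have hq : q ≠ u := fun hc => hu (hc ▸ Sym2.mem_mk_right _ _)
        rw [crossPred_mk, crossPred_mk]
        have h1 : p ∈ symmDiff S {u} ↔ p ∈ S := by
          simp [Finset.mem_symmDiff, hp]
        have h2 : q ∈ symmDiff S {u} ↔ q ∈ S := by
          simp [Finset.mem_symmDiff, hq]
        rw [h1, h2]
    have hflip : ∀ S : Finset V,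
        crossPred (symmDiff S {u}) s(u, v) ↔ ¬ crossPred S s(u, v) := by
      intro S
      rw [crossPred_mk, crossPred_mk]
      have h1 : u ∈ symmDiff S {u} ↔ ¬ (u ∈ S) := by
        simp [Finset.mem_symmDiff]
      have h2 : v ∈ symmDiff S {u} ↔ v ∈ S := by
        simp [Finset.mem_symmDiff, Ne.symm huv]
      rw [h1, h2]
      tauto
    set P := fun S : Finset V => ∀ f ∈ M', crossPred S f with hP
    have hPinv : ∀ S : Finset V, P (symmDiff S {u}) ↔ P S := by
      intro S
      constructor
      · intro h f hf
        exact (hcrossinv f (hu_not f hf) S).mp (h f hf)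
      · intro h f hf
        exact (hcrossinv f (hu_not f hf) S).mpr (h f hf)
    have hbij : (Finset.univ.filter fun S => P S ∧ crossPred S s(u, v)).card =
        (Finset.univ.filter fun S => P S ∧ ¬ crossPred S s(u, v)).card := by
      apply Finset.card_nbij' (i := fun S => symmDiff S {u}) (j := fun S => symmDiff S {u})
      · intro S hS
        rw [Finset.mem_coe, Finset.mem_filter] at hS ⊢
        refine ⟨Finset.mem_univ _, (hPinv S).mpr hS.2.1, ?_⟩
        rw [hflip S]
        exact fun hc => hc hS.2.2
      · intro S hS
        rw [Finset.mem_coe, Finset.mem_filter] at hS ⊢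
        exact ⟨Finset.mem_univ _, (hPinv S).mpr hS.2.1, (hflip S).mpr hS.2.2⟩
      · intro S _; exact symmDiff_symmDiff_cancel_right {u} S
      · intro S _; exact symmDiff_symmDiff_cancel_right {u} S
    have hpred : (Finset.univ.filter fun S : Finset V => ∀ f ∈ insert s(u,v) M', crossPred S f)
        = (Finset.univ.filter fun S => P S ∧ crossPred S s(u,v)) := by
      apply Finset.filter_congr
      intro S _
      rw [Finset.forall_mem_insert]
      constructor
      · rintro ⟨h1, h2⟩; exact ⟨h2, h1⟩
      · rintro ⟨h1, h2⟩; exact ⟨h2, h1⟩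
    have hhalf := Finset.card_filter_add_card_filter_not
        (s := Finset.univ.filter P) (p := fun S => crossPred S s(u,v))
    rw [Finset.filter_filter, Finset.filter_filter] at hhalf
    rw [hpred, Finset.card_insert_of_notMem hem, pow_succ]
    have h2A : (Finset.univ.filter fun S => P S ∧ crossPred S s(u,v)).card * 2
        = (Finset.univ.filter P).card := by
      omega
    calc (Finset.univ.filter fun S => P S ∧ crossPred S s(u,v)).card * (2 ^ M'.card * 2)
        = ((Finset.univ.filter fun S => P S ∧ crossPred S s(u,v)).card * 2) * 2 ^ M'.card := by
          ring
      _ = (Finset.univ.filter P).card * 2 ^ M'.card := by rw [h2A]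
      _ = 2 ^ Fintype.card V := ih hdiag' hpair'

lemma mCount_eq_card (H : SimpleGraph V) (k : ℕ) :
    mCount H k =
      (Finset.univ.filter fun M : Finset (Sym2 V) => IsGMatching H M ∧ M.card = k).card := by
  rw [mCount, Nat.card_eq_fintype_card, Fintype.card_subtype]

lemma sum_cut (G : SimpleGraph V) (k : ℕ) :
    (∑ S : Finset V, mCount (cutGraph G S) k) * 2 ^ k = mCount G k * 2 ^ Fintype.card V := by
  have hrw : ∀ S : Finset V, mCount (cutGraph G S) k
      = ∑ M ∈ (Finset.univ : Finset (Finset (Sym2 V))),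
          if IsGMatching (cutGraph G S) M ∧ M.card = k then 1 else 0 := by
    intro S; rw [mCount_eq_card, Finset.card_filter]
  calc (∑ S : Finset V, mCount (cutGraph G S) k) * 2 ^ k
      = (∑ S : Finset V, ∑ M ∈ (Finset.univ : Finset (Finset (Sym2 V))),
          if IsGMatching (cutGraph G S) M ∧ M.card = k then 1 else 0) * 2 ^ k := by
        rw [Finset.sum_congr rfl fun S _ => hrw S]
    _ = ∑ M ∈ (Finset.univ : Finset (Finset (Sym2 V))),
          (∑ S : Finset V, if IsGMatching (cutGraph G S) M ∧ M.card = k then 1 else 0) * 2 ^ k := by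
        rw [Finset.sum_comm, Finset.sum_mul]
    _ = ∑ M ∈ (Finset.univ : Finset (Finset (Sym2 V))),
          (if IsGMatching G M ∧ M.card = k then 2 ^ Fintype.card V else 0) := by
        apply Finset.sum_congr rfl
        intro M _
        by_cases hM : IsGMatching G M ∧ M.card = k
        · rw [if_pos hM]
          have hiff : ∀ S : Finset V,
              (IsGMatching (cutGraph G S) M ∧ M.card = k) ↔ (∀ e ∈ M, crossPred S e) := by
            intro S
            rw [matching_cut_iff]
            constructor
            · rintro ⟨⟨_, h2⟩, _⟩; exact h2
            · intro h; exact ⟨⟨hM.1, h⟩, hM.2⟩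
          rw [Finset.sum_congr rfl fun S _ => if_congr (hiff S) rfl rfl, ← Finset.card_filter]
          have hdiag : ∀ e ∈ M, ¬ e.IsDiag := fun e he =>
            G.not_isDiag_of_mem_edgeSet (hM.1.1 (Finset.mem_coe.mpr he))
          have := cross_count M hdiag hM.1.2
          rw [hM.2] at this
          exact this
        · rw [if_neg hM]
          have hnone : ∀ S : Finset V, ¬ (IsGMatching (cutGraph G S) M ∧ M.card = k) :=
            fun S hc => hM ⟨isGMatching_of_cut hc.1, hc.2⟩
          simp [hnone]
    _ = mCount G k * 2 ^ Fintype.card V := by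
        rw [← Finset.sum_filter, Finset.sum_const, smul_eq_mul, mCount_eq_card]

/-- For a graph `G` on `n` vertices with no even cycles,
`(1/2^n) ∑_{S ⊆ V(G)} ∑_k |M(E_S,k)| (4x)^k = g(G,2x)` as polynomials over `ℚ`, and
`∑_{S ⊆ V(G)} ∑_k |M(E_S,k)| = 2^n g(G,1/2)`. -/
theorem stmt4 (G : SimpleGraph V)
    (hG : ∀ (v : V) (w : G.Walk v v), w.IsCycle → ¬ Even w.length) :
    (C ((1 : ℚ) / 2 ^ Fintype.card V) *
        ∑ S : Finset V, ∑ k ∈ Finset.range (Fintype.card V + 1),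
          C ((MCount (cutGraph G S) k : ℚ)) * (C 4 * X) ^ k =
      (gPoly G).comp (C 2 * X)) ∧
    (∑ S : Finset V, ∑ k ∈ Finset.range (Fintype.card V + 1),
        (MCount (cutGraph G S) k : ℚ)) =
      2 ^ Fintype.card V * (gPoly G).eval (1 / 2 : ℚ) := by
    classical
  have key : ∀ k, (∑ S : Finset V, (MCount (cutGraph G S) k : ℚ)) * 2 ^ k
      = (mCount G k : ℚ) * 2 ^ Fintype.card V := by
    intro k
    have h1 := sum_cut G k
    have h2 : ∀ S : Finset V, MCount (cutGraph G S) k = mCount (cutGraph G S) k :=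
      fun S => MCount_eq_mCount G hG S k
    rw [Finset.sum_congr rfl fun S _ => by rw [h2 S]]
    exact_mod_cast h1
  have h2n : (2 : ℚ) ^ Fintype.card V ≠ 0 := pow_ne_zero _ two_ne_zero
  have first : C ((1 : ℚ) / 2 ^ Fintype.card V) *
        ∑ S : Finset V, ∑ k ∈ Finset.range (Fintype.card V + 1),
          C ((MCount (cutGraph G S) k : ℚ)) * (C 4 * X) ^ k =
      (gPoly G).comp (C 2 * X) := by
    rw [gPoly, Polynomial.sum_comp, Finset.sum_comm, Finset.mul_sum]
    apply Finset.sum_congr rfl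
    intro k _
    rw [Polynomial.mul_comp, Polynomial.C_comp, Polynomial.pow_comp, Polynomial.X_comp]
    rw [← Finset.sum_mul, ← map_sum C _ Finset.univ]
    set A : ℚ := ∑ S : Finset V, (MCount (cutGraph G S) k : ℚ) with hA
    have h4 : (4 : ℚ) ^ k = 2 ^ k * 2 ^ k := by
      rw [show (4 : ℚ) = 2 * 2 by norm_num, mul_pow]
    have hscal : (1 / 2 ^ Fintype.card V : ℚ) * (A * 4 ^ k) = (mCount G k : ℚ) * 2 ^ k := by
      have hAA : A * (4 : ℚ) ^ k = (mCount G k : ℚ) * 2 ^ k * 2 ^ Fintype.card V := by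
        rw [h4]
        calc A * ((2 : ℚ) ^ k * 2 ^ k) = (A * 2 ^ k) * 2 ^ k := by ring
          _ = (mCount G k : ℚ) * 2 ^ Fintype.card V * 2 ^ k := by rw [key k]
          _ = (mCount G k : ℚ) * 2 ^ k * 2 ^ Fintype.card V := by ring
      field_simp
      linear_combination hAA
    calc C ((1 : ℚ) / 2 ^ Fintype.card V) * (C A * (C 4 * X) ^ k)
        = C ((1 / 2 ^ Fintype.card V : ℚ) * (A * 4 ^ k)) * X ^ k := by
          rw [mul_pow, C_mul, C_mul, C_pow]; ring
      _ = C ((mCount G k : ℚ) * 2 ^ k) * X ^ k := by rw [hscal]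
      _ = C ((mCount G k : ℚ)) * (C 2 * X) ^ k := by
          rw [mul_pow, C_mul, C_pow]; ring
  refine ⟨first, ?_⟩
  have hev := congrArg (Polynomial.eval (1/4 : ℚ)) first
  simp only [Polynomial.eval_mul, Polynomial.eval_C, Polynomial.eval_finset_sum,
    Polynomial.eval_pow, Polynomial.eval_X, Polynomial.eval_comp] at hev
  norm_num at hev
  rw [← hev]
  field_simp
end

section
/- For any finite simple graphs G and H, the independence polynomial of the lexicographic product satisfies i(G[H], x) = i(G, i(H,x) − 1). -/
open Polynomial
open scoped Classical

/-- `A` is an independent set of the graph `H`. -/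
def IsIndepSet {W : Type} (H : SimpleGraph W) (A : Finset W) : Prop :=
  (A : Set W).Pairwise fun a b => ¬ H.Adj a b

/-- `i_k(H)`: the number of independent sets of size `k` in `H`. -/
noncomputable def indepCount {W : Type} (H : SimpleGraph W) (k : ℕ) : ℕ :=
  Nat.card {A : Finset W // IsIndepSet H A ∧ A.card = k}

/-- The independence polynomial `i(H,x) = ∑_k i_k(H) x^k` (over `ℝ`). -/
noncomputable def iPoly {W : Type} [Fintype W] (H : SimpleGraph W) : Polynomial ℝ :=
  ∑ k ∈ Finset.range (Fintype.card W + 1), C (indepCount H k : ℝ) * X ^ k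

/-- The lexicographic product `G[H]`: `(a,x)` adjacent to `(b,y)` iff `a ~ b` in `G`,
or `a = b` and `x ~ y` in `H`. -/
def lexProd {U W : Type} (G : SimpleGraph U) (H : SimpleGraph W) : SimpleGraph (U × W) where
  Adj a b := G.Adj a.1 b.1 ∨ (a.1 = b.1 ∧ H.Adj a.2 b.2)
  symm := by
    constructor
    rintro a b (h | ⟨h1, h2⟩)
    · exact Or.inl h.symm
    · exact Or.inr ⟨h1.symm, h2.symm⟩
  loopless := by
    constructor
    rintro a (h | ⟨-, h2⟩)
    · exact G.irrefl h
    · exact H.irrefl h2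

noncomputable def indSets {W : Type} [Fintype W] (H : SimpleGraph W) : Finset (Finset W) :=
  Finset.univ.filter (fun A => IsIndepSet H A)

lemma indepCount_eq {W : Type} [Fintype W] (H : SimpleGraph W) (k : ℕ) :
    indepCount H k = ((indSets H).filter (fun A => A.card = k)).card := by
  rw [indepCount, Nat.card_eq_fintype_card, Fintype.card_subtype]
  congr 1
  ext A
  simp [indSets, Finset.filter_filter]

lemma iPoly_eq_sum {W : Type} [Fintype W] (H : SimpleGraph W) :
    iPoly H = ∑ A ∈ indSets H, X ^ A.card := by
  rw [iPoly, ← Finset.sum_fiberwise_of_maps_to (g := fun A : Finset W => A.card)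
    (fun A _ => Finset.mem_range.2 (Nat.lt_succ_of_le (Finset.card_le_univ A)))]
  refine Finset.sum_congr rfl fun k _ => ?_
  rw [indepCount_eq, Finset.sum_congr rfl (fun A hA => by
    rw [(Finset.mem_filter.1 hA).2]), Finset.sum_const, nsmul_eq_mul]
  rw [Polynomial.C_eq_natCast]

lemma comp_eq {U : Type} [Fintype U] (G : SimpleGraph U) (p : Polynomial ℝ) :
    (iPoly G).comp p = ∑ S ∈ indSets G, p ^ S.card := by
  rw [iPoly_eq_sum]
  simp [Polynomial.X_pow_comp]

lemma empty_mem_indSets {W : Type} [Fintype W] (H : SimpleGraph W) :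
    ∅ ∈ indSets H := by
  rw [indSets, Finset.mem_filter]
  exact ⟨Finset.mem_univ _, by simp [IsIndepSet]⟩

lemma iPoly_sub_one {W : Type} [Fintype W] (H : SimpleGraph W) :
    iPoly H - 1 = ∑ A ∈ (indSets H).erase ∅, X ^ A.card := by
  rw [iPoly_eq_sum, ← Finset.add_sum_erase _ _ (empty_mem_indSets H)]
  simp

noncomputable def build {U W : Type} (x : Σ S : Finset U, ∀ a ∈ S, Finset W) :
    Finset (U × W) :=
  x.1.attach.biUnion fun a => (x.2 a.1 a.2).image (fun w => (a.1, w))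

lemma mem_build {U W : Type} (x : Σ S : Finset U, ∀ a ∈ S, Finset W) (p : U × W) :
    p ∈ build x ↔ ∃ h : p.1 ∈ x.1, p.2 ∈ x.2 p.1 h := by
  simp only [build, Finset.mem_biUnion, Finset.mem_image, Finset.mem_attach, true_and]
  constructor
  · rintro ⟨⟨a, ha⟩, w, hw, rfl⟩
    exact ⟨ha, hw⟩
  · rintro ⟨h, hw⟩
    exact ⟨⟨p.1, h⟩, p.2, hw, rfl⟩

lemma card_build {U W : Type} (x : Σ S : Finset U, ∀ a ∈ S, Finset W) :
    (build x).card = ∑ a ∈ x.1.attach, (x.2 a.1 a.2).card := by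
  rw [build, Finset.card_biUnion]
  · exact Finset.sum_congr rfl fun a _ =>
      Finset.card_image_of_injective _ (fun u v h => (Prod.mk.injEq _ _ _ _ ▸ h).2)
  · intro a _ b _ hab
    simp only [Finset.disjoint_left, Finset.mem_image]
    rintro p ⟨u, -, rfl⟩ ⟨v, -, h⟩
    exact hab (Subtype.ext ((Prod.mk.injEq _ _ _ _ ▸ h).1.symm))

lemma sigma_eq {U W : Type} {S S' : Finset U} (f : ∀ a ∈ S, Finset W)
    (f' : ∀ a ∈ S', Finset W) (h : S = S')
    (hf : ∀ a (ha : a ∈ S) (ha' : a ∈ S'), f a ha = f' a ha') :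
    (⟨S, f⟩ : Σ S : Finset U, ∀ a ∈ S, Finset W) = ⟨S', f'⟩ := by
  subst h
  simp only [Sigma.mk.inj_iff, heq_eq_eq, true_and]
  funext a ha
  exact hf a ha ha


/-- For any finite simple graphs `G` and `H`,
`i(G[H], x) = i(G, i(H,x) - 1)`. -/
theorem stmt8 {U W : Type} [Fintype U] [Fintype W]
    (G : SimpleGraph U) (H : SimpleGraph W) :
    iPoly (lexProd G H) = (iPoly G).comp (iPoly H - 1) := by
  rw [comp_eq, iPoly_sub_one, iPoly_eq_sum]
  have hpow : ∀ S : Finset U, (∑ A ∈ (indSets H).erase ∅, (X : ℝ[X]) ^ A.card) ^ S.card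
      = ∑ f ∈ S.pi (fun _ => (indSets H).erase ∅),
          X ^ (∑ a ∈ S.attach, (f a.1 a.2).card) := by
    intro S
    rw [← Finset.prod_const, Finset.prod_sum]
    exact Finset.sum_congr rfl fun f _ => Finset.prod_pow_eq_pow_sum _ _ _
  simp_rw [hpow]
  rw [Finset.sum_sigma']
  refine Finset.sum_nbij'
    (i := fun T => ⟨T.image Prod.fst,
      fun a _ => (T.filter (fun p => p.1 = a)).image Prod.snd⟩)
    (j := build) ?_ ?_ ?_ ?_ ?_
  · -- hi
    intro T hT
    have hTind : IsIndepSet (lexProd G H) T := by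
      simpa [indSets] using hT
    rw [Finset.mem_sigma]
    constructor
    · simp only [indSets, Finset.mem_filter, Finset.mem_univ, true_and]
      intro a ha b hb hab
      simp only [Finset.coe_image, Set.mem_image, Finset.mem_coe] at ha hb
      obtain ⟨p, hp, rfl⟩ := ha
      obtain ⟨q, hq, rfl⟩ := hb
      have hpq : p ≠ q := fun h => hab (by rw [h])
      have := hTind hp hq hpq
      simp only [lexProd] at this
      tauto
    · rw [Finset.mem_pi]
      intro a ha
      rw [Finset.mem_image] at ha
      rw [Finset.mem_erase]
      constructor
      · obtain ⟨p, hp, rfl⟩ := ha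
        intro h
        have : p.2 ∈ (T.filter (fun q => q.1 = p.1)).image Prod.snd :=
          Finset.mem_image.2 ⟨p, Finset.mem_filter.2 ⟨hp, rfl⟩, rfl⟩
        have h' : (T.filter (fun q => q.1 = p.1)).image Prod.snd = ∅ := h
        rw [h'] at this
        exact absurd this (Finset.notMem_empty _)
      · simp only [indSets, Finset.mem_filter, Finset.mem_univ, true_and]
        intro w hw v hv hwv
        simp only [Finset.coe_image, Set.mem_image, Finset.mem_coe,
          Finset.mem_filter] at hw hv
        obtain ⟨p, ⟨hp, hp1⟩, rfl⟩ := hw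
        obtain ⟨q, ⟨hq, hq1⟩, rfl⟩ := hv
        have hpq : p ≠ q := fun h => hwv (by rw [h])
        have := hTind hp hq hpq
        simp only [lexProd] at this
        push_neg at this
        exact this.2 (hp1.trans hq1.symm)
  · -- hj
    intro x hx
    rw [Finset.mem_sigma] at hx
    obtain ⟨hS, hf⟩ := hx
    rw [Finset.mem_pi] at hf
    have hSind : IsIndepSet G x.1 := by simpa [indSets] using hS
    simp only [indSets, Finset.mem_filter, Finset.mem_univ, true_and]
    intro p hp q hq hpq
    simp only [Finset.mem_coe, mem_build] at hp hq
    obtain ⟨a, w⟩ := p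
    obtain ⟨b, v⟩ := q
    obtain ⟨ha, hw⟩ := hp
    obtain ⟨hb, hv⟩ := hq
    simp only [lexProd]
    push_neg
    by_cases hab : a = b
    · subst hab
      refine ⟨fun hG => G.irrefl hG, fun _ => ?_⟩
      have := hf a hb
      rw [Finset.mem_erase] at this
      have hind : IsIndepSet H (x.2 a hb) := by
        simpa [indSets] using this.2
      have hne : w ≠ v := fun h => hpq (Prod.ext rfl h)
      exact hind hw hv hne
    · exact ⟨hSind ha hb hab, fun h => absurd h hab⟩
  · -- left_inv
    intro T hT
    ext p
    rw [mem_build]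
    simp only [Finset.mem_image, Finset.mem_filter]
    constructor
    · rintro ⟨-, q, ⟨hq, hq1⟩, hq2⟩
      have : q = p := Prod.ext hq1 hq2
      exact this ▸ hq
    · intro hp
      exact ⟨⟨p, hp, rfl⟩, p, ⟨hp, rfl⟩, rfl⟩
  · -- right_inv
    intro x hx
    rw [Finset.mem_sigma] at hx
    obtain ⟨hS, hf⟩ := hx
    rw [Finset.mem_pi] at hf
    obtain ⟨S, f⟩ := x
    have hS1 : (build ⟨S, f⟩).image Prod.fst = S := by
      ext a
      simp only [Finset.mem_image]
      constructor
      · rintro ⟨p, hp, rfl⟩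
        exact ((mem_build _ _).1 hp).1
      · intro ha
        have := hf a ha
        rw [Finset.mem_erase] at this
        obtain ⟨w, hw⟩ := Finset.nonempty_iff_ne_empty.2 this.1
        exact ⟨(a, w), (mem_build _ _).2 ⟨ha, hw⟩, rfl⟩
    refine sigma_eq _ _ hS1 ?_
    intro a ha ha'
    ext w
    simp only [Finset.mem_image, Finset.mem_filter]
    constructor
    · rintro ⟨p, ⟨hp, hp1⟩, rfl⟩
      obtain ⟨h1, h2⟩ := (mem_build _ _).1 hp
      subst hp1
      exact h2
    · intro hw
      exact ⟨(a, w), ⟨(mem_build _ _).2 ⟨ha', hw⟩, rfl⟩, rfl⟩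
  · -- values
    intro T hT
    congr 1
    rw [Finset.card_eq_sum_card_fiberwise
      (f := Prod.fst) (t := T.image Prod.fst) (fun p hp => Finset.mem_image.2 ⟨p, hp, rfl⟩),
      ← Finset.sum_attach (T.image Prod.fst)]
    refine Finset.sum_congr rfl fun a _ => ?_
    rw [Finset.card_image_of_injOn]
    intro p hp q hq h
    rw [Finset.mem_coe, Finset.mem_filter] at hp hq
    exact Prod.ext (hp.2.trans hq.2.symm) h
end

section
/- Let G be a finite simple graph in which each edge belongs to at most one even cycle, let V be a subset of the vertices of G, and let M_1, M_2, M_3, M_4 be matchings of G each of whose vertex set is exactly V. If C is a cycle of G all of whose edges lie in the symmetric difference of M_1 and M_2, and C' is a cycle of G all of whose edges lie in the symmetric difference of M_3 and M_4, then either C = C' or C and C' are vertex-disjoint. -/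
variable {V : Type} [Fintype V] [DecidableEq V]

/-- `Cy` is the edge set of a cycle of `G`. -/
def IsCycleEdges (G : SimpleGraph V) (Cy : Finset (Sym2 V)) : Prop :=
  ∃ (v : V) (w : G.Walk v v), w.IsCycle ∧ w.edges.toFinset = Cy

/-- `Cy` is the edge set of an even cycle of `G`. -/
def IsEvenCycleEdges (G : SimpleGraph V) (Cy : Finset (Sym2 V)) : Prop :=
  ∃ (v : V) (w : G.Walk v v), w.IsCycle ∧ Even w.length ∧ w.edges.toFinset = Cy

/-- Each edge of `G` belongs to at most one even cycle of `G`. -/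
def EachEdgeInAtMostOneEvenCycle (G : SimpleGraph V) : Prop :=
  ∀ C₁ C₂ : Finset (Sym2 V), IsEvenCycleEdges G C₁ → IsEvenCycleEdges G C₂ →
    ∀ e : Sym2 V, e ∈ C₁ → e ∈ C₂ → C₁ = C₂

set_option linter.unusedSectionVars false

open SimpleGraph

lemma matching_unique {G : SimpleGraph V} {M : Finset (Sym2 V)} (hM : IsGMatching G M)
    {e f : Sym2 V} (he : e ∈ M) (hf : f ∈ M) {v : V} (hv : v ∈ e) (hv' : v ∈ f) : e = f := by
  by_contra hne
  exact hM.2 (Finset.mem_coe.2 he) (Finset.mem_coe.2 hf) hne v ⟨hv, hv'⟩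

open scoped Classical in
noncomputable def mpartner (M : Finset (Sym2 V)) (u : V) : V :=
  if h : ∃ e ∈ M, u ∈ e then Sym2.Mem.other h.choose_spec.2 else u

lemma mpartner_spec {G : SimpleGraph V} {M : Finset (Sym2 V)} (hM : IsGMatching G M)
    {e : Sym2 V} {u : V} (he : e ∈ M) (hu : u ∈ e) : s(u, mpartner M u) = e := by
  classical
  have h : ∃ e ∈ M, u ∈ e := ⟨e, he, hu⟩
  rw [mpartner, dif_pos h]
  rw [Sym2.other_spec h.choose_spec.2]
  exact matching_unique hM h.choose_spec.1 he h.choose_spec.2 hu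

lemma mpartner_mem {G : SimpleGraph V} {M : Finset (Sym2 V)} (hM : IsGMatching G M)
    {e : Sym2 V} {u : V} (he : e ∈ M) (hu : u ∈ e) : mpartner M u ∈ e := by
  rw [← mpartner_spec hM he hu]
  exact Sym2.mem_mk_right _ _

lemma mpartner_ne {G : SimpleGraph V} {M : Finset (Sym2 V)} (hM : IsGMatching G M)
    {e : Sym2 V} {u : V} (he : e ∈ M) (hu : u ∈ e) : mpartner M u ≠ u := by
  have hd : ¬e.IsDiag := G.not_isDiag_of_mem_edgeSet (hM.1 he)
  intro h
  apply hd
  rw [← mpartner_spec hM he hu, h]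
  exact Sym2.mk_isDiag_iff.2 rfl

lemma mpartner_invol {G : SimpleGraph V} {M : Finset (Sym2 V)} (hM : IsGMatching G M)
    {e : Sym2 V} {u : V} (he : e ∈ M) (hu : u ∈ e) : mpartner M (mpartner M u) = u := by
  have hw : mpartner M u ∈ e := mpartner_mem hM he hu
  have h2 : s(mpartner M u, mpartner M (mpartner M u)) = e := mpartner_spec hM he hw
  rw [← mpartner_spec hM he hu] at h2
  rcases Sym2.eq_iff.1 h2 with ⟨h3, _⟩ | ⟨_, h4⟩
  · exact absurd h3 (mpartner_ne hM he hu)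
  · exact h4

lemma mpartner_id {M : Finset (Sym2 V)} {u : V} (h : ¬∃ e ∈ M, u ∈ e) : mpartner M u = u := by
  classical
  rw [mpartner, dif_neg]
  intro h'; exact h h'

lemma mpartner_involutive {G : SimpleGraph V} {M : Finset (Sym2 V)} (hM : IsGMatching G M) :
    Function.Involutive (mpartner M) := by
  intro u
  by_cases h : ∃ e ∈ M, u ∈ e
  · obtain ⟨e, he, hu⟩ := h
    exact mpartner_invol hM he hu
  · rw [mpartner_id h, mpartner_id h]

lemma parity_aux (pA pB : V → V) (hA : Function.Involutive pA) (hB : Function.Involutive pB)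
    (v : V) (hfixA : ∀ t : ℕ, pA ((pA ∘ pB)^[t] v) ≠ (pA ∘ pB)^[t] v)
    (hfixB : ∀ t : ℕ, pB ((pA ∘ pB)^[t] v) ≠ (pA ∘ pB)^[t] v) (j : ℕ) :
    (pA ∘ pB)^[j] v ≠ pA v := by
  intro hj
  set g := pA ∘ pB with hg
  have hgapp : ∀ x, g x = pA (pB x) := fun _ => rfl
  have key : ∀ s, s ≤ j → pA (g^[j - s] v) = g^[s] v := by
    intro s
    induction s with
    | zero =>
      intro _
      simpa [hj] using hA v
    | succ s ih =>
      intro hs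
      have h1 : pA (g^[j - s] v) = g^[s] v := ih (by omega)
      have hjs : j - s = (j - (s + 1)) + 1 := by omega
      rw [hjs, Function.iterate_succ_apply'] at h1
      rw [hgapp, hA] at h1
      have h3 : pB (g^[s] v) = g^[j - (s + 1)] v := by rw [← h1, hB]
      rw [Function.iterate_succ_apply', hgapp, h3]
  rcases Nat.even_or_odd j with ⟨t, ht⟩ | ⟨t, ht⟩
  · have h := key t (by omega)
    rw [show j - t = t by omega] at h
    exact hfixA t h
  · have h := key t (by omega)
    rw [show j - t = t + 1 by omega] at h
    rw [Function.iterate_succ_apply', hgapp, hA] at h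
    exact hfixB t h

lemma opp_class {G : SimpleGraph V} {A B : Finset (Sym2 V)} (hA : IsGMatching G A)
    (hB : IsGMatching G B) {e f : Sym2 V}
    (he : e ∈ (A ∪ B) \ (A ∩ B)) (hf : f ∈ (A ∪ B) \ (A ∩ B)) (hne : e ≠ f)
    {x : V} (hx : x ∈ e) (hx' : x ∈ f) : e ∈ A ↔ f ∉ A := by
  rw [Finset.mem_sdiff, Finset.mem_union, Finset.mem_inter] at he hf
  constructor
  · intro heA hfA
    exact hne (matching_unique hA heA hfA hx hx')
  · intro hfA
    rcases he.1 with h | h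
    · exact h
    · rcases hf.1 with h' | h'
      · exact absurd h' hfA
      · exact absurd (matching_unique hB h h' hx hx') hne

lemma alt_walk {G : SimpleGraph V} {A B : Finset (Sym2 V)} (hA : IsGMatching G A)
    (hB : IsGMatching G B) :
    ∀ {y z : V} (p : G.Walk y z), ¬p.Nil → p.edges.Nodup →
      (∀ e ∈ p.edges, e ∈ (A ∪ B) \ (A ∩ B)) →
      ∃ e₁ eℓ, e₁ ∈ p.edges ∧ eℓ ∈ p.edges ∧ y ∈ e₁ ∧ z ∈ eℓ ∧
        (e₁ ∈ A ↔ (eℓ ∈ A ↔ Odd p.length)) ∧ (2 ≤ p.length → e₁ ≠ eℓ) := by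
  intro y z p
  induction p with
  | nil => intro h; exact absurd SimpleGraph.Walk.Nil.nil h
  | @cons u v w h p ih =>
    intro _ hnodup hsub
    rw [SimpleGraph.Walk.edges_cons, List.nodup_cons] at hnodup
    by_cases hpn : p.Nil
    · have hvw : v = w := hpn.eq
      have hlen : p.length = 0 := SimpleGraph.Walk.nil_iff_length_eq.1 hpn
      refine ⟨s(u, v), s(u, v), ?_, ?_, Sym2.mem_mk_left _ _, ?_, ?_, ?_⟩
      · simp
      · simp
      · rw [← hvw]; exact Sym2.mem_mk_right _ _
      · simp [hlen]
      · intro h2; simp [hlen] at h2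
    · obtain ⟨e₁, eℓ, he₁, heℓ, hy, hz, hrel, -⟩ :=
        ih hpn hnodup.2 (fun e he => hsub e (by simp [he]))
      have hne : s(u, v) ≠ e₁ := fun hh => hnodup.1 (hh ▸ he₁)
      have hopp : s(u, v) ∈ A ↔ e₁ ∉ A :=
        opp_class hA hB (hsub _ (by simp)) (hsub _ (by simp [he₁])) hne
          (Sym2.mem_mk_right _ _) hy
      refine ⟨s(u, v), eℓ, by simp, by simp [heℓ], Sym2.mem_mk_left _ _, hz, ?_, ?_⟩
      · have hodd : Odd (SimpleGraph.Walk.cons h p).length ↔ ¬Odd p.length := by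
          rw [SimpleGraph.Walk.length_cons]
          rw [Nat.odd_add_one]
        rw [hodd]
        tauto
      · intro _
        exact fun hh => hnodup.1 (hh ▸ heℓ)

lemma cycle_even {G : SimpleGraph V} {A B : Finset (Sym2 V)} (hA : IsGMatching G A)
    (hB : IsGMatching G B) {v : V} (w : G.Walk v v) (hw : w.IsCycle)
    (hsub : ∀ e ∈ w.edges, e ∈ (A ∪ B) \ (A ∩ B)) : Even w.length := by
  have hlen : 3 ≤ w.length := hw.three_le_length
  have hnil : ¬w.Nil := by
    rw [SimpleGraph.Walk.not_nil_iff_lt_length]; omega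
  obtain ⟨e₁, eℓ, he₁, heℓ, hy, hz, hrel, hne⟩ :=
    alt_walk hA hB w hnil hw.edges_nodup hsub
  have hne' : e₁ ≠ eℓ := hne (by omega)
  have hopp : e₁ ∈ A ↔ eℓ ∉ A := opp_class hA hB (hsub _ he₁) (hsub _ heℓ) hne' hy hz
  rw [← Nat.not_odd_iff_even]
  tauto
def PGood (A B : Finset (Sym2 V)) (u : V) : Prop :=
  (∃ e ∈ A, u ∈ e) ∧ (∃ e ∈ B, u ∈ e) ∧
    s(u, mpartner A u) ∉ B ∧ s(u, mpartner B u) ∉ A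

lemma pgood_B {G : SimpleGraph V} {A B : Finset (Sym2 V)} (hA : IsGMatching G A)
    (hB : IsGMatching G B) (hV : edgeVerts A = edgeVerts B) {u : V} (hu : PGood A B u) :
    PGood A B (mpartner B u) := by
  obtain ⟨hcovA, ⟨eb, heb, hueb⟩, h3, h4⟩ := hu
  set w := mpartner B u with hw
  have specB : s(u, w) = eb := mpartner_spec hB heb hueb
  have hweb : w ∈ eb := mpartner_mem hB heb hueb
  have hwB : ∃ e ∈ B, w ∈ e := ⟨eb, heb, hweb⟩
  have hwA : ∃ e ∈ A, w ∈ e := by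
    have : w ∈ edgeVerts B := hwB
    rw [← hV] at this
    exact this
  have hpBw : mpartner B w = u := mpartner_invol hB heb hueb
  refine ⟨hwA, hwB, ?_, ?_⟩
  · -- s(w, mpartner A w) ∉ B
    intro hmem
    obtain ⟨ea', hea', hwea'⟩ := hwA
    have specA : s(w, mpartner A w) = ea' := mpartner_spec hA hea' hwea'
    have : s(w, mpartner A w) = eb :=
      matching_unique hB hmem heb (Sym2.mem_mk_left _ _) hweb
    rw [specA] at this
    apply h4
    rw [specB, ← this]
    exact hea'
  · -- s(w, mpartner B w) ∉ A
    rw [hpBw]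
    rw [Sym2.eq_swap, specB, ← specB]
    exact h4

lemma pgood_A {G : SimpleGraph V} {A B : Finset (Sym2 V)} (hA : IsGMatching G A)
    (hB : IsGMatching G B) (hV : edgeVerts A = edgeVerts B) {u : V} (hu : PGood A B u) :
    PGood A B (mpartner A u) := by
  obtain ⟨⟨ea, hea, huea⟩, hcovB, h3, h4⟩ := hu
  set w := mpartner A u with hw
  have specA : s(u, w) = ea := mpartner_spec hA hea huea
  have hwea : w ∈ ea := mpartner_mem hA hea huea
  have hwA : ∃ e ∈ A, w ∈ e := ⟨ea, hea, hwea⟩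
  have hwB : ∃ e ∈ B, w ∈ e := by
    have : w ∈ edgeVerts A := hwA
    rw [hV] at this
    exact this
  have hpAw : mpartner A w = u := mpartner_invol hA hea huea
  refine ⟨hwA, hwB, ?_, ?_⟩
  · rw [hpAw]
    rw [Sym2.eq_swap, specA, ← specA]
    exact h3
  · intro hmem
    obtain ⟨eb', heb', hweb'⟩ := hwB
    have specB : s(w, mpartner B w) = eb' := mpartner_spec hB heb' hweb'
    have : s(w, mpartner B w) = ea :=
      matching_unique hA hmem hea (Sym2.mem_mk_left _ _) hwea
    rw [specB] at this
    apply h3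
    rw [specA, ← this]
    exact heb'
lemma exists_walk_aux {G : SimpleGraph V} {A B : Finset (Sym2 V)} (hA : IsGMatching G A)
    (hB : IsGMatching G B) (hV : edgeVerts A = edgeVerts B) :
    ∀ (k : ℕ) (u : V), PGood A B u →
      ∃ w : (SimpleGraph.fromEdgeSet (((A ∪ B) \ (A ∩ B) : Finset (Sym2 V)) : Set (Sym2 V))).Walk
          u ((mpartner A ∘ mpartner B)^[k] u),
        ∀ e ∈ w.edges, e ∈ B ∨ ∃ i, i < k ∧
          e = s((mpartner A ∘ mpartner B)^[i + 1] u,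
                mpartner A ((mpartner A ∘ mpartner B)^[i + 1] u)) := by
  intro k
  induction k with
  | zero =>
    intro u _
    refine ⟨SimpleGraph.Walk.nil.copy rfl (by simp), ?_⟩
    simp
  | succ k ih =>
    intro u hu
    set pA := mpartner A with hpA
    set pB := mpartner B with hpB
    set g : V → V := pA ∘ pB with hg
    have hu' : PGood A B (pB u) := pgood_B hA hB hV hu
    have hu'' : PGood A B (g u) := pgood_A hA hB hV hu'
    obtain ⟨w, hw⟩ := ih (g u) hu''
    obtain ⟨hcovA, ⟨eb, heb, hueb⟩, h3, h4⟩ := hu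
    have specB : s(u, pB u) = eb := mpartner_spec hB heb hueb
    obtain ⟨⟨ea', hea', hwea'⟩, _, h3', h4'⟩ := hu'
    have specA' : s(pB u, pA (pB u)) = ea' := mpartner_spec hA hea' hwea'
    have hadj1 : (SimpleGraph.fromEdgeSet
        (((A ∪ B) \ (A ∩ B) : Finset (Sym2 V)) : Set (Sym2 V))).Adj u (pB u) := by
      rw [SimpleGraph.fromEdgeSet_adj]
      constructor
      · rw [Finset.mem_coe, Finset.mem_sdiff, Finset.mem_union, Finset.mem_inter]
        refine ⟨Or.inr (specB ▸ heb), fun hand => h4 hand.1⟩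
      · exact (mpartner_ne hB heb hueb).symm
    have hadj2 : (SimpleGraph.fromEdgeSet
        (((A ∪ B) \ (A ∩ B) : Finset (Sym2 V)) : Set (Sym2 V))).Adj (pB u) (g u) := by
      rw [SimpleGraph.fromEdgeSet_adj]
      constructor
      · rw [Finset.mem_coe, Finset.mem_sdiff, Finset.mem_union, Finset.mem_inter]
        refine ⟨Or.inl (specA' ▸ hea'), fun hand => h3' hand.2⟩
      · exact (mpartner_ne hA hea' hwea').symm
    have hend : (g^[k]) (g u) = g^[k + 1] u := (Function.iterate_succ_apply g k u).symm
    refine ⟨((SimpleGraph.Walk.cons hadj1 (SimpleGraph.Walk.cons hadj2 w)).copy rfl hend), ?_⟩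
    intro e he
    rw [SimpleGraph.Walk.edges_copy, SimpleGraph.Walk.edges_cons, SimpleGraph.Walk.edges_cons]
      at he
    simp only [List.mem_cons] at he
    rcases he with rfl | rfl | he
    · left
      rw [specB]
      exact heb
    · right
      refine ⟨0, Nat.succ_pos k, ?_⟩
      have h1 : g^[0 + 1] u = g u := by simp
      rw [h1]
      have h2 : pA (g u) = pB u := by
        show pA (pA (pB u)) = pB u
        exact mpartner_involutive hA (pB u)
      rw [h2]
      exact Sym2.eq_swap
    · rcases hw e he with hBmem | ⟨i, hik, heq⟩
      · left; exact hBmem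
      · right
        refine ⟨i + 1, by omega, ?_⟩
        rw [heq]
        have : g^[i + 1] (g u) = g^[i + 1 + 1] u := (Function.iterate_succ_apply g (i + 1) u).symm
        rw [this]
lemma exists_evenCycle {G : SimpleGraph V} {A B : Finset (Sym2 V)} (hA : IsGMatching G A)
    (hB : IsGMatching G B) (hV : edgeVerts A = edgeVerts B) {v : V} {a c : Sym2 V}
    (haA : a ∈ A) (hva : v ∈ a) (hcB : c ∈ B) (hvc : v ∈ c) (haB : a ∉ B) :
    ∃ D : Finset (Sym2 V), IsEvenCycleEdges G D ∧ a ∈ D ∧ c ∈ D := by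
  classical
  set pA := mpartner A with hpA
  set pB := mpartner B with hpB
  set g : V → V := pA ∘ pB with hg
  set H := SimpleGraph.fromEdgeSet (((A ∪ B) \ (A ∩ B) : Finset (Sym2 V)) : Set (Sym2 V))
    with hH
  have haSD : a ∈ (A ∪ B) \ (A ∩ B) := by
    rw [Finset.mem_sdiff, Finset.mem_union, Finset.mem_inter]
    exact ⟨Or.inl haA, fun h => haB h.2⟩
  have hcA : c ∉ A := fun h => haB ((matching_unique hA h haA hvc hva) ▸ hcB)
  have speca : s(v, pA v) = a := mpartner_spec hA haA hva
  have specc : s(v, pB v) = c := mpartner_spec hB hcB hvc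
  have hPv : PGood A B v :=
    ⟨⟨a, haA, hva⟩, ⟨c, hcB, hvc⟩, by rw [speca]; exact haB, by rw [specc]; exact hcA⟩
  have hPall : ∀ k, PGood A B (g^[k] v) := by
    intro k
    induction k with
    | zero => simpa using hPv
    | succ k ih =>
      rw [Function.iterate_succ_apply']
      exact pgood_A hA hB hV (pgood_B hA hB hV ih)
  have hAinv : Function.Involutive pA := mpartner_involutive hA
  have hBinv : Function.Involutive pB := mpartner_involutive hB
  have hfixA : ∀ t, pA (g^[t] v) ≠ g^[t] v := by
    intro t
    obtain ⟨⟨e, he, hue⟩, -, -, -⟩ := hPall t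
    exact mpartner_ne hA he hue
  have hfixB : ∀ t, pB (g^[t] v) ≠ g^[t] v := by
    intro t
    obtain ⟨-, ⟨e, he, hue⟩, -, -⟩ := hPall t
    exact mpartner_ne hB he hue
  have hparity : ∀ j, g^[j] v ≠ pA v := parity_aux pA pB hAinv hBinv v hfixA hfixB
  have hper : ∃ n, 0 < n ∧ g^[n] v = v := by
    have hbij : Function.Bijective g := (hAinv.bijective).comp (hBinv.bijective)
    obtain ⟨i, j, hne, heq⟩ := Finite.exists_ne_map_eq_of_infinite (fun n : ℕ => g^[n] v)
    have heq' : g^[i] v = g^[j] v := heq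
    have key : ∀ i j : ℕ, i < j → g^[i] v = g^[j] v → ∃ n, 0 < n ∧ g^[n] v = v := by
      intro i j hij heq
      refine ⟨j - i, by omega, ?_⟩
      have hinj : Function.Injective (g^[i]) := Function.Injective.iterate hbij.injective i
      apply hinj
      rw [← Function.iterate_add_apply, show i + (j - i) = j by omega]
      exact heq.symm
    rcases hne.lt_or_gt with hij | hij
    · exact key i j hij heq'
    · exact key j i hij heq'.symm
  set m := Nat.find hper with hm
  have hm_spec : 0 < m ∧ g^[m] v = v := Nat.find_spec hper
  have hm_min : ∀ i, i < m → ¬(0 < i ∧ g^[i] v = v) := fun i h => Nat.find_min hper h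
  obtain ⟨w0, hw0⟩ := exists_walk_aux hA hB hV (m - 1) v hPv
  obtain ⟨-, ⟨eb', heb', hueb'⟩, -, h4'⟩ := hPall (m - 1)
  have specB' : s(g^[m - 1] v, pB (g^[m - 1] v)) = eb' := mpartner_spec hB heb' hueb'
  have hadjL : H.Adj (g^[m - 1] v) (pB (g^[m - 1] v)) := by
    rw [hH, SimpleGraph.fromEdgeSet_adj]
    constructor
    · rw [Finset.mem_coe, Finset.mem_sdiff, Finset.mem_union, Finset.mem_inter]
      constructor
      · right; rw [specB']; exact heb'
      · exact fun hand => h4' hand.1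
    · exact (mpartner_ne hB heb' hueb').symm
  have hend : pB (g^[m - 1] v) = pA v := by
    have h1 : pA (pB (g^[m - 1] v)) = v := by
      have h0 : g^[(m - 1) + 1] v = v := by
        rw [show (m - 1) + 1 = m by omega]; exact hm_spec.2
      rw [Function.iterate_succ_apply'] at h0
      exact h0
    calc pB (g^[m - 1] v) = pA (pA (pB (g^[m - 1] v))) := (hAinv _).symm
      _ = pA v := by rw [h1]
  have havoid : s(v, pA v) ∉ ((w0.concat hadjL).copy rfl hend).edges := by
    rw [SimpleGraph.Walk.edges_copy, SimpleGraph.Walk.edges_concat]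
    intro hmem
    rw [List.concat_eq_append, List.mem_append, List.mem_singleton] at hmem
    rcases hmem with hmem | hmem
    · rcases hw0 _ hmem with hBmem | ⟨i, hik, heq⟩
      · rw [speca] at hBmem; exact haB hBmem
      · rcases Sym2.eq_iff.1 heq with ⟨h1, -⟩ | ⟨-, h2⟩
        · exact (hm_min (i + 1) (by omega)) ⟨by omega, h1.symm⟩
        · exact hparity (i + 1) h2.symm
    · have hae : a = eb' := by rw [← speca, hmem, specB']
      exact haB (hae ▸ heb')
  have hadja : H.Adj v (pA v) := by
    rw [hH, SimpleGraph.fromEdgeSet_adj]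
    constructor
    · rw [Finset.mem_coe, speca]; exact haSD
    · exact (mpartner_ne hA haA hva).symm
  have hreach : (H \ SimpleGraph.fromEdgeSet {s(v, pA v)}).Reachable v (pA v) :=
    (SimpleGraph.reachable_delete_edges_iff_exists_walk).2 ⟨(w0.concat hadjL).copy rfl hend, havoid⟩
  obtain ⟨u, p, hpc, hap⟩ :=
    (SimpleGraph.adj_and_reachable_delete_edges_iff_exists_cycle).1 ⟨hadja, hreach⟩
  have hvp : v ∈ p.support := SimpleGraph.Walk.fst_mem_support_of_mem_edges p hap
  set q := p.rotate v hvp with hqdef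
  have hqc : q.IsCycle := hpc.rotate hvp
  have haq : s(v, pA v) ∈ q.edges := ((p.rotate_edges v hvp).mem_iff).2 hap
  have hq3 : 3 ≤ q.length := hqc.three_le_length
  have hqnil : ¬q.Nil := by rw [SimpleGraph.Walk.not_nil_iff_lt_length]; omega
  obtain ⟨x, hvx, r, hqeq⟩ := SimpleGraph.Walk.not_nil_iff.1 hqnil
  have hqrnil : ¬q.reverse.Nil := by
    rw [SimpleGraph.Walk.not_nil_iff_lt_length, SimpleGraph.Walk.length_reverse]; omega
  obtain ⟨y, hvy, r2, hqeq2⟩ := SimpleGraph.Walk.not_nil_iff.1 hqrnil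
  have he1 : s(v, x) ∈ q.edges := by rw [hqeq]; simp
  have he2 : s(v, y) ∈ q.edges := by
    have h0 : s(v, y) ∈ q.reverse.edges := by rw [hqeq2]; simp
    rw [SimpleGraph.Walk.edges_reverse, List.mem_reverse] at h0
    exact h0
  have hne12 : s(v, x) ≠ s(v, y) := by
    intro heq12
    have hL1 : q.edges = s(v, x) :: r.edges := by rw [hqeq]; rfl
    have hL2 : q.edges.reverse = s(v, y) :: r2.edges := by
      rw [← SimpleGraph.Walk.edges_reverse, hqeq2]; rfl
    have hL3 : q.edges = r2.edges.reverse ++ [s(v, y)] := by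
      have h0 := congrArg List.reverse hL2
      simpa using h0
    have hnd : q.edges.Nodup := hqc.isCircuit.isTrail.edges_nodup
    have hlenq : q.edges.length = q.length := q.length_edges
    have hlen3 := congrArg List.length hL3
    rw [hlenq] at hlen3
    simp only [List.length_append, List.length_reverse, List.length_singleton] at hlen3
    obtain ⟨h0, t0, ht0⟩ : ∃ h0 t0, r2.edges.reverse = h0 :: t0 := by
      cases hr2 : r2.edges.reverse with
      | nil =>
        have hr2' : r2.edges = [] := List.reverse_eq_nil_iff.1 hr2
        rw [hr2'] at hlen3
        simp at hlen3
        omega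
      | cons h0 t0 => exact ⟨h0, t0, rfl⟩
    have hcons : s(v, x) :: r.edges = h0 :: (t0 ++ [s(v, y)]) := by
      rw [← hL1, hL3, ht0]; rfl
    have hh : s(v, x) = h0 := by injection hcons
    rw [hL3, ht0] at hnd
    rw [List.nodup_append] at hnd
    exact hnd.2.2 _ List.mem_cons_self _ (List.mem_singleton_self _)
      (by rw [← hh, heq12])
  have hclass : ∀ z : V, s(v, z) ∈ q.edges → s(v, z) = a ∨ s(v, z) = c := by
    intro z hz
    have hzE := q.edges_subset_edgeSet hz
    rw [hH, SimpleGraph.edgeSet_fromEdgeSet] at hzE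
    obtain ⟨hzSD, -⟩ := hzE
    rw [Finset.mem_coe, Finset.mem_sdiff, Finset.mem_union] at hzSD
    rcases hzSD.1 with hzA | hzB
    · left; exact matching_unique hA hzA haA (Sym2.mem_mk_left _ _) hva
    · right; exact matching_unique hB hzB hcB (Sym2.mem_mk_left _ _) hvc
  have haq' : a ∈ q.edges := by rw [← speca]; exact haq
  have hcq : c ∈ q.edges := by
    rcases hclass x he1 with h1 | h1
    · rcases hclass y he2 with h2 | h2
      · exact absurd (h1.trans h2.symm) hne12
      · rw [← h2]; exact he2
    · rw [← h1]; exact he1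
  have hsubG : ∀ e ∈ q.edges, e ∈ G.edgeSet := by
    intro e he
    have h0 := q.edges_subset_edgeSet he
    rw [hH, SimpleGraph.edgeSet_fromEdgeSet] at h0
    obtain ⟨hSD, -⟩ := h0
    rw [Finset.mem_coe, Finset.mem_sdiff, Finset.mem_union] at hSD
    rcases hSD.1 with h | h
    · exact hA.1 h
    · exact hB.1 h
  have hqGc : (q.transfer G hsubG).IsCycle := hqc.transfer hsubG
  have hedges : (q.transfer G hsubG).edges = q.edges := q.edges_transfer hsubG
  have hSDq : ∀ e ∈ (q.transfer G hsubG).edges, e ∈ (A ∪ B) \ (A ∩ B) := by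
    intro e he
    rw [hedges] at he
    have h0 := q.edges_subset_edgeSet he
    rw [hH, SimpleGraph.edgeSet_fromEdgeSet] at h0
    exact Finset.mem_coe.1 h0.1
  have heven : Even (q.transfer G hsubG).length := cycle_even hA hB _ hqGc hSDq
  exact ⟨(q.transfer G hsubG).edges.toFinset, ⟨v, q.transfer G hsubG, hqGc, heven, rfl⟩,
    List.mem_toFinset.2 (hedges ▸ haq'), List.mem_toFinset.2 (hedges ▸ hcq)⟩
lemma key_lemma {G : SimpleGraph V} (hG : EachEdgeInAtMostOneEvenCycle G)
    {A B A' B' : Finset (Sym2 V)} (hA : IsGMatching G A) (hB : IsGMatching G B)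
    (hA' : IsGMatching G A') (hB' : IsGMatching G B')
    (hVAA' : edgeVerts A = edgeVerts A')
    {Cy Cy' : Finset (Sym2 V)} (hCy : IsCycleEdges G Cy) (hCy' : IsCycleEdges G Cy')
    (hsub : Cy ⊆ (A ∪ B) \ (A ∩ B)) (hsub' : Cy' ⊆ (A' ∪ B') \ (A' ∩ B'))
    {v : V} {a c : Sym2 V} (haCy : a ∈ Cy) (hva : v ∈ a) (haA : a ∈ A)
    (hcCy : c ∈ Cy') (hvc : v ∈ c) (hcA' : c ∈ A') : Cy = Cy' := by
  have hCyE : IsEvenCycleEdges G Cy := by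
    obtain ⟨u, w, hwc, hwE⟩ := hCy
    exact ⟨u, w, hwc,
      cycle_even hA hB w hwc (fun e he => hsub (hwE ▸ List.mem_toFinset.2 he)), hwE⟩
  have hCy'E : IsEvenCycleEdges G Cy' := by
    obtain ⟨u, w, hwc, hwE⟩ := hCy'
    exact ⟨u, w, hwc,
      cycle_even hA' hB' w hwc (fun e he => hsub' (hwE ▸ List.mem_toFinset.2 he)), hwE⟩
  by_cases hac : a = c
  · exact hG Cy Cy' hCyE hCy'E a haCy (hac ▸ hcCy)
  · have haA' : a ∉ A' := fun h => hac (matching_unique hA' h hcA' hva hvc)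
    obtain ⟨D, hDE, haD, hcD⟩ := exists_evenCycle hA hA' hVAA' haA hva hcA' hvc haA'
    have h1 : Cy = D := hG Cy D hCyE hDE a haCy haD
    have h2 : Cy' = D := hG Cy' D hCy'E hDE c hcCy hcD
    rw [h1, h2]
/-- Suppose each edge of `G` belongs to at most one even cycle. Let
`M₁,M₂,M₃,M₄` be matchings of `G`, each with vertex set `V₀`. If `Cy` is a cycle of `G`
contained in the symmetric difference of `M₁` and `M₂`, and `Cy'` is a cycle of `G`
contained in the symmetric difference of `M₃` and `M₄`, then `Cy = Cy'` or `Cy` and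
`Cy'` are vertex-disjoint. -/
theorem stmt15 (G : SimpleGraph V) (hG : EachEdgeInAtMostOneEvenCycle G)
    (V₀ : Set V) (M₁ M₂ M₃ M₄ : Finset (Sym2 V))
    (hM₁ : IsGMatching G M₁) (hM₂ : IsGMatching G M₂)
    (hM₃ : IsGMatching G M₃) (hM₄ : IsGMatching G M₄)
    (hV₁ : edgeVerts M₁ = V₀) (hV₂ : edgeVerts M₂ = V₀)
    (hV₃ : edgeVerts M₃ = V₀) (hV₄ : edgeVerts M₄ = V₀)
    (Cy Cy' : Finset (Sym2 V))
    (hCy : IsCycleEdges G Cy) (hCy' : IsCycleEdges G Cy')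
    (hsub : Cy ⊆ (M₁ ∪ M₂) \ (M₁ ∩ M₂))
    (hsub' : Cy' ⊆ (M₃ ∪ M₄) \ (M₃ ∩ M₄)) :
    Cy = Cy' ∨ Disjoint (edgeVerts Cy) (edgeVerts Cy') := by
  by_cases hdisj : Disjoint (edgeVerts Cy) (edgeVerts Cy')
  · exact Or.inr hdisj
  left
  obtain ⟨v, hv1, hv2⟩ := Set.not_disjoint_iff.1 hdisj
  obtain ⟨a, haCy, hva⟩ := hv1
  obtain ⟨c, hcCy, hvc⟩ := hv2
  have hsd := hsub haCy
  rw [Finset.mem_sdiff, Finset.mem_union] at hsd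
  have hsd' := hsub' hcCy
  rw [Finset.mem_sdiff, Finset.mem_union] at hsd'
  have hswap : ∀ X Y : Finset (Sym2 V), (X ∪ Y) \ (X ∩ Y) = (Y ∪ X) \ (Y ∩ X) := by
    intro X Y; rw [Finset.union_comm, Finset.inter_comm]
  rcases hsd.1 with ha1 | ha2 <;> rcases hsd'.1 with hc1 | hc2
  · exact key_lemma hG hM₁ hM₂ hM₃ hM₄ (hV₁.trans hV₃.symm) hCy hCy' hsub hsub'
      haCy hva ha1 hcCy hvc hc1
  · exact key_lemma hG hM₁ hM₂ hM₄ hM₃ (hV₁.trans hV₄.symm) hCy hCy' hsub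
      (by rw [hswap M₄ M₃]; exact hsub') haCy hva ha1 hcCy hvc hc2
  · exact key_lemma hG hM₂ hM₁ hM₃ hM₄ (hV₂.trans hV₃.symm) hCy hCy'
      (by rw [hswap M₂ M₁]; exact hsub) hsub' haCy hva ha2 hcCy hvc hc1
  · exact key_lemma hG hM₂ hM₁ hM₄ hM₃ (hV₂.trans hV₄.symm) hCy hCy'
      (by rw [hswap M₂ M₁]; exact hsub) (by rw [hswap M₄ M₃]; exact hsub')
      haCy hva ha2 hcCy hvc hc2
end
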